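/- arXiv:1604.04918 — 3 statements merged into one kernel-verified Lean document; each statement's English description precedes it below -/
import Mathlib

section
/- Let V ⊂ P^n (n > 1) be a hypersurface over F_p defined by a polynomial of the form f·x_0 + g, where f and g are homogeneous polynomials in x_1,...,x_n with deg g = deg f + 1. Let k be the number of F_p-points of the hypersurface f = 0 in P^{n-1}. Then the number of F_p-points of V is congruent to 2 - k modulo p. -/
/-!
Over a finite field `K`, the affine zeros of a homogeneous `h` of positive degree are the origin
and `|K| - 1` nonzero points over each projective zero, so modulo `char K` their number is
`1 - #(projective zeros of h)`. For `F = f x₀ + g` count affine zeros fibrewise over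
`(x₁, …, xₙ)`: a fibre has one point where `f ≠ 0`, and `0` or `|K|` points where `f = 0`, so
modulo `char K` there are `#{f ≠ 0} = |K|ⁿ - #{f = 0} ≡ -#{f = 0}` of them. Comparing the two
counts for `F` and for `f` gives `1 - #V ≡ -(1 - k)`.
-/

open MvPolynomial
open scoped LinearAlgebra.Projectivization

namespace MvPolynomial.IsHomogeneous

variable {σ R : Type*} [CommSemiring R] {h : MvPolynomial σ R} {d : ℕ}

theorem eval_smul (hh : h.IsHomogeneous d) (c : R) (x : σ → R) :
    eval (c • x) h = c ^ d * eval x h := by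
  rw [eval_eq, eval_eq, Finset.mul_sum]
  refine Finset.sum_congr rfl fun s hs => ?_
  rw [hh.degree_eq_sum_deg_support hs, mul_left_comm, ← Finset.prod_pow_eq_pow_sum,
    ← Finset.prod_mul_distrib]
  simp only [Pi.smul_apply, smul_eq_mul, mul_pow]

theorem eval_zero_eq_zero (hh : h.IsHomogeneous d) (hd : d ≠ 0) : eval 0 h = 0 := by
  simpa [zero_pow hd] using hh.eval_smul 0 0

theorem eval_units_smul_eq_zero_iff {K : Type*} [Field K] {h : MvPolynomial σ K}
    (hh : h.IsHomogeneous d) (c : Kˣ) (x : σ → K) :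
    eval (c • x) h = 0 ↔ eval x h = 0 := by
  rw [Units.smul_def, hh.eval_smul, mul_eq_zero_iff_left (pow_ne_zero _ c.ne_zero)]

end MvPolynomial.IsHomogeneous

namespace Projectivization

variable {K V : Type*} [Field K] [AddCommGroup V] [Module K V]

theorem card_ne_zero_and_eq_card_mul (Z : V → Prop) (hZ : ∀ (c : Kˣ) v, Z (c • v) ↔ Z v) :
    Nat.card {v : V // v ≠ 0 ∧ Z v} = Nat.card {P : ℙ K V // Z P.rep} * (Nat.card K - 1) := by
  calc Nat.card {v : V // v ≠ 0 ∧ Z v}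
      = Nat.card {v : {v : V // v ≠ 0} // Z v} :=
        Nat.card_congr (Equiv.subtypeSubtypeEquivSubtypeInter _ _).symm
    _ = Nat.card {q : ℙ K V × Kˣ // Z q.1.rep} := by
        refine Nat.card_congr ((nonZeroEquivProjectivizationProdUnits K V).subtypeEquiv
          fun v => ?_)
        obtain ⟨a, ha⟩ := exists_smul_eq_mk_rep K v.1 v.2
        exact (hZ a v).symm.trans (iff_of_eq (congrArg Z ha))
    _ = Nat.card ({P : ℙ K V // Z P.rep} × Kˣ) :=
        Nat.card_congr (Equiv.prodSubtypeFstEquivSubtypeProd (p := fun P : ℙ K V => Z P.rep))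
    _ = _ := by rw [Nat.card_prod, Nat.card_units]

end Projectivization

theorem card_subtype_eq_card_ne_zero_and_add_one {V : Type*} [Zero V] [Finite V]
    {Z : V → Prop} (hZ : Z 0) :
    Nat.card {v : V // Z v} = Nat.card {v : V // v ≠ 0 ∧ Z v} + 1 := by
  have h := Set.ncard_sdiff_singleton_add_one (s := {v | Z v}) hZ
  rw [← Nat.card_coe_set_eq, ← Nat.card_coe_set_eq] at h
  refine h.symm.trans (congrArg (· + 1) (Nat.card_congr (Equiv.subtypeEquivRight fun v => ?_)))
  simp [and_comm]

section FiniteField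

variable {K : Type*} [Field K] [Fintype K]

theorem MvPolynomial.IsHomogeneous.natCast_card_zeros {σ : Type*} [Fintype σ]
    {h : MvPolynomial σ K} {d : ℕ} (hh : h.IsHomogeneous d) (hd : d ≠ 0) :
    (Nat.card {x : σ → K // eval x h = 0} : K) =
      1 - Nat.card {P : ℙ K (σ → K) // eval P.rep h = 0} := by
  rw [card_subtype_eq_card_ne_zero_and_add_one (Z := fun x => eval x h = 0)
      (hh.eval_zero_eq_zero hd),
    Projectivization.card_ne_zero_and_eq_card_mul _ hh.eval_units_smul_eq_zero_iff,
    Nat.cast_add, Nat.cast_mul, Nat.cast_pred Nat.card_pos, Nat.card_eq_fintype_card (α := K),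
    FiniteField.cast_card_eq_zero]
  ring

theorem natCast_card_linear_root [DecidableEq K] (a b : K) :
    (Nat.card {t : K // a * t + b = 0} : K) = if a = 0 then 0 else 1 := by
  split_ifs with ha
  · subst ha
    by_cases hb : b = 0 <;> simp [hb]
  · have : ∀ t, a * t + b = 0 ↔ t = -b / a := fun t => by
      rw [eq_div_iff ha, mul_comm, eq_neg_iff_add_eq_zero]
    simp [this]

theorem natCast_card_linear_zeros {A : Type*} [Fintype A] (a b : A → K) :
    (Nat.card {q : A × K // a q.1 * q.2 + b q.1 = 0} : K) = Nat.card {x // a x ≠ 0} := by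
  classical
  rw [Nat.card_congr (Equiv.subtypeProdEquivSigmaSubtype fun x t => a x * t + b x = 0),
    Nat.card_sigma, Nat.cast_sum, Finset.sum_congr rfl fun x _ => natCast_card_linear_root _ _,
    Nat.card_eq_fintype_card, Fintype.card_subtype]
  simp [Finset.sum_ite]

theorem natCast_card_not_eq_neg {σ : Type*} [Fintype σ] [Nonempty σ] (P : (σ → K) → Prop) :
    (Nat.card {x : σ → K // ¬ P x} : K) = - Nat.card {x // P x} := by
  classical
  simp only [Nat.card_eq_fintype_card]
  rw [Fintype.card_subtype_compl, Nat.cast_sub (Fintype.card_subtype_le _), Fintype.card_fun,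
    Nat.cast_pow, FiniteField.cast_card_eq_zero, zero_pow Fintype.card_ne_zero, zero_sub]

theorem natCast_card_zeros_rename_mul_X_zero_add {n : ℕ} [NeZero n]
    (f g : MvPolynomial (Fin n) K) :
    (Nat.card {x : Fin (n + 1) → K // eval x (rename Fin.succ f * X 0 + rename Fin.succ g) = 0}
      : K) = - Nat.card {x : Fin n → K // eval x f = 0} := by
  have hsplit : Nat.card
      {x : Fin (n + 1) → K // eval x (rename Fin.succ f * X 0 + rename Fin.succ g) = 0} =
        Nat.card {q : (Fin n → K) × K // eval q.1 f * q.2 + eval q.1 g = 0} := by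
    refine (Nat.card_congr (((Equiv.prodComm _ _).trans (Fin.consEquiv fun _ => K)).subtypeEquiv
      fun q => ?_)).symm
    simp [eval_rename, Function.comp_def]
  rw [hsplit, natCast_card_linear_zeros (fun x => eval x f) (fun x => eval x g),
    natCast_card_not_eq_neg]

end FiniteField

/-- linear reduction: for a hypersurface `V ⊂ ℙⁿ` (`n > 1`) over `𝔽_p`
defined by `f·x₀ + g` with `f, g` homogeneous in `x₁,…,xₙ` of degrees `d, d+1` (`d > 0`),
the number of `𝔽_p`-points of `V` is congruent to `2 - k` mod `p`, where `k` is the number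
of `𝔽_p`-points of the hypersurface `f = 0` in `ℙ^{n-1}`. -/
theorem stmt4 (p n : ℕ) [Fact p.Prime] (hn : 1 < n) (d : ℕ) (hd : 0 < d)
    (f g : MvPolynomial (Fin n) (ZMod p))
    (hf : f.IsHomogeneous d) (hg : g.IsHomogeneous (d + 1)) :
    (Nat.card {P : Projectivization (ZMod p) (Fin (n + 1) → ZMod p) //
        eval P.rep ((rename Fin.succ f) * X 0 + rename Fin.succ g) = 0} : ZMod p) =
      2 - (Nat.card {Q : Projectivization (ZMod p) (Fin n → ZMod p) //
        eval Q.rep f = 0} : ZMod p) := by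
  have : NeZero n := ⟨by omega⟩
  have hF : (rename Fin.succ f * X 0 + rename Fin.succ g).IsHomogeneous (d + 1) :=
    (hf.rename_isHomogeneous.mul (isHomogeneous_X _ 0)).add hg.rename_isHomogeneous
  have hcount := natCast_card_zeros_rename_mul_X_zero_add f g
  rw [hF.natCast_card_zeros d.succ_ne_zero, hf.natCast_card_zeros hd.ne'] at hcount
  linear_combination -hcount
end

section
/- Let q ≡ 1 (mod 2) be a prime power and α ∈ F_q^×. The surface in the weighted projective space P(2,1,1,1) over F_q defined by t^2 = α·u·v·w·(u+v+w) has exactly q^2 + (1 + χ(−α))·q + 1 points over F_q, where χ is the quadratic character of F_q. -/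
/-!
Scaling by `Fˣ` acts freely on the nonzero solutions of `t² = α·uvw(u+v+w)`, since `u = v = w = 0`
forces `t = 0`; so the number `N` of points satisfies `(q - 1)·N + 1 = #(affine solutions)`.
Counting square roots, the affine count is `q³ + Σ χ(α·uvw(u+v+w))`. Summing over `w` first gives
`χ(αuv)·Σ_w χ(w(w+s))` with `s = u + v`, a Jacobi sum equal to `-1` unless `s = 0`, when it is
`q - 1`; only the antidiagonal `v = -u` survives, contributing `χ(-α)·q(q-1)`.
-/

/-- The scaling relation defining the weighted projective space `ℙ(2,1,1,1)`:
`(t,u,v,w) ~ (λ²t, λu, λv, λw)` for `λ ≠ 0`.  Coordinates are indexed by `Fin 4`,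
with index `0` the weight-2 coordinate `t`. -/
def wpRel (F : Type*) [Field F] (x y : {v : Fin 4 → F // v ≠ 0}) : Prop :=
  ∃ l : F, l ≠ 0 ∧ y.1 0 = l ^ 2 * x.1 0 ∧ y.1 1 = l * x.1 1 ∧
    y.1 2 = l * x.1 2 ∧ y.1 3 = l * x.1 3

/-- The setoid of the scaling relation on nonzero coordinate vectors; its quotient is the set
of points of the weighted projective space `ℙ(2,1,1,1)` over `F`. -/
def wpSetoid (F : Type*) [Field F] : Setoid {v : Fin 4 → F // v ≠ 0} where
  r := wpRel F
  iseqv := by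
    constructor
    · intro x; exact ⟨1, one_ne_zero, by simp, by simp, by simp, by simp⟩
    · rintro x y ⟨l, hl, h0, h1, h2, h3⟩
      exact ⟨l⁻¹, inv_ne_zero hl, by rw [h0]; field_simp, by rw [h1]; field_simp,
        by rw [h2]; field_simp, by rw [h3]; field_simp⟩
    · rintro x y z ⟨l, hl, h0, h1, h2, h3⟩ ⟨l', hl', h0', h1', h2', h3'⟩
      exact ⟨l' * l, mul_ne_zero hl' hl, by rw [h0', h0]; ring, by rw [h1', h1]; ring,
        by rw [h2', h2]; ring, by rw [h3', h3]; ring⟩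

open Finset

theorem Nat.card_eq_mul_of_card_fiber_eq {α β : Type*} [Finite α] [Finite β] (f : α → β) {k : ℕ}
    (h : ∀ b, Nat.card {a // f a = b} = k) : Nat.card α = k * Nat.card β := by
  have := Fintype.ofFinite β
  rw [← Nat.card_congr (Equiv.sigmaFiberEquiv f), Nat.card_sigma, Nat.card_eq_fintype_card]
  simp [h, mul_comm]

theorem Nat.card_subtype_ne_add_one {α : Type*} [Finite α] {p : α → Prop} {a : α} (ha : p a) :
    Nat.card {x : {v // v ≠ a} // p x} + 1 = Nat.card {x // p x} := by
  classical
  rw [← Nat.card_congr (Equiv.optionSubtypeNe (⟨a, ha⟩ : {x // p x})), Finite.card_option]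
  exact congrArg (· + 1) <| Nat.card_congr
    { toFun x := ⟨⟨x.1.1, x.2⟩, fun h => x.1.2 (congrArg Subtype.val h)⟩
      invFun x := ⟨⟨x.1.1, fun h => x.2 (Subtype.ext h)⟩, x.1.2⟩
      left_inv _ := rfl
      right_inv _ := rfl }

section CharacterSums

variable {F : Type*} [Field F] [Fintype F] [DecidableEq F]

theorem sum_quadraticChar_mul_self :
    ∑ w : F, quadraticChar F (w * w) = Fintype.card F - 1 := by
  have h : ∀ w : F, quadraticChar F (w * w) = (1 : MulChar F ℤ) w := fun w => by
    rw [map_mul, ← MulChar.mul_apply, ← sq, (quadraticChar_isQuadratic F).sq_eq_one]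
  simp_rw [h, MulChar.sum_one_eq_card_units, Fintype.card_units]
  rw [Nat.cast_sub Fintype.card_pos, Nat.cast_one]

theorem sum_quadraticChar_mul_add_of_ne_zero (hF : ringChar F ≠ 2) {s : F} (hs : s ≠ 0) :
    ∑ w : F, quadraticChar F (w * (w + s)) = -1 := by
  have h : ∀ x : F, quadraticChar F (-s * x * (-s * x + s)) =
      quadraticChar F (-1) * (quadraticChar F x * quadraticChar F (1 - x)) := fun x => by
    rw [show -s * x * (-s * x + s) = -1 * s ^ 2 * (x * (1 - x)) by ring, map_mul, map_mul,
      quadraticChar_sq_one' hs, mul_one, map_mul]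
  rw [← Equiv.sum_comp (Equiv.mulLeft₀ (-s) (neg_ne_zero.mpr hs))]
  simp only [Equiv.mulLeft₀_apply, h, ← mul_sum]
  have hJ := jacobiSum_nontrivial_inv (quadraticChar_ne_one hF)
  rw [(quadraticChar_isQuadratic F).inv] at hJ
  rw [← jacobiSum, hJ, mul_neg, ← sq, quadraticChar_sq_one (neg_ne_zero.mpr one_ne_zero)]

theorem sum_quadraticChar_mul_add (hF : ringChar F ≠ 2) (s : F) :
    ∑ w : F, quadraticChar F (w * (w + s)) = (if s = 0 then (Fintype.card F : ℤ) else 0) - 1 := by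
  split_ifs with hs
  · simpa [hs] using sum_quadraticChar_mul_self
  · simpa using sum_quadraticChar_mul_add_of_ne_zero hF hs

theorem sum_quadraticChar_surface (hF : ringChar F ≠ 2) (a : F) :
    ∑ u : F, ∑ v : F, ∑ w : F, quadraticChar F (a * u * v * w * (u + v + w)) =
      quadraticChar F (-a) * (Fintype.card F * (Fintype.card F - 1)) := by
  have inner : ∀ u v : F, ∑ w : F, quadraticChar F (a * u * v * w * (u + v + w)) =
      (if v = -u then Fintype.card F * (quadraticChar F (-a) * quadraticChar F (u * u)) else 0) -
        quadraticChar F (a * u) * quadraticChar F v := by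
    intro u v
    have hfactor : ∀ w, a * u * v * w * (u + v + w) = (a * u * v) * (w * (w + (u + v))) :=
      fun w => by ring
    simp_rw [hfactor, map_mul (quadraticChar F) (a * u * v), ← mul_sum,
      sum_quadraticChar_mul_add hF]
    rcases eq_or_ne v (-u) with rfl | huv
    · rw [add_neg_cancel, if_pos rfl, if_pos rfl, ← map_mul (quadraticChar F) (-a),
        ← map_mul (quadraticChar F) (a * u), show -a * (u * u) = a * u * -u by ring]
      ring
    · rw [if_neg (fun h => huv (eq_neg_of_add_eq_zero_right h)), if_neg huv,
        map_mul (quadraticChar F) (a * u)]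
      ring
  simp only [inner, sum_sub_distrib, sum_ite_eq', mem_univ, if_true, ← mul_sum,
    quadraticChar_sum_zero hF, mul_zero, sub_zero, sum_quadraticChar_mul_self]
  ring

theorem card_subtype_sq_eq_sum_quadraticChar (hF : ringChar F ≠ 2) {ι : Type*} [Fintype ι]
    (g : ι → F) :
    (Nat.card {p : ι × F // p.2 ^ 2 = g p.1} : ℤ) = ∑ i, (quadraticChar F (g i) + 1) := by
  rw [Nat.card_congr (Equiv.subtypeProdEquivSigmaSubtype fun i t => t ^ 2 = g i), Nat.card_sigma]
  push_cast
  refine sum_congr rfl fun i _ => ?_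
  rw [← quadraticChar_card_sqrts hF, Set.toFinset_card, ← Nat.card_eq_fintype_card]
  rfl

end CharacterSums

section WeightedProjective

variable {F : Type*} [Field F]

def wpScale (l : F) (x : Fin 4 → F) : Fin 4 → F :=
  ![l ^ 2 * x 0, l * x 1, l * x 2, l * x 3]

theorem wpScale_succ (l : F) (x : Fin 4 → F) (i : Fin 3) : wpScale l x i.succ = l * x i.succ := by
  fin_cases i <;> rfl

theorem wpScale_ne_zero {l : F} (hl : l ≠ 0) {x : Fin 4 → F} (hx : x ≠ 0) : wpScale l x ≠ 0 := by
  intro h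
  apply hx
  ext i
  have hi := congrFun h i
  fin_cases i <;> simpa [wpScale, hl] using hi

theorem wpRel_iff {x y : {v : Fin 4 → F // v ≠ 0}} :
    wpRel F x y ↔ ∃ l ≠ 0, y.1 = wpScale l x.1 := by
  constructor
  · rintro ⟨l, hl, h0, h1, h2, h3⟩
    exact ⟨l, hl, funext fun i => by fin_cases i <;> assumption⟩
  · rintro ⟨l, hl, h⟩
    exact ⟨l, hl, by rw [h]; rfl, by rw [h]; rfl, by rw [h]; rfl, by rw [h]; rfl⟩

theorem card_wpRel_of_succ_ne_zero {x : {v : Fin 4 → F // v ≠ 0}} {i : Fin 3}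
    (hi : x.1 i.succ ≠ 0) : Nat.card {y // wpRel F x y} = Nat.card F - 1 := by
  let orbit (l : Fˣ) : {y // wpRel F x y} :=
    ⟨⟨wpScale l x.1, wpScale_ne_zero l.ne_zero x.2⟩, wpRel_iff.2 ⟨l, l.ne_zero, rfl⟩⟩
  have hbij : Function.Bijective orbit := by
    refine ⟨fun l m h => Units.ext ?_, fun y => ?_⟩
    · have hlm := congrFun (congrArg (fun y => y.1.1) h) i.succ
      simp only [orbit, wpScale_succ] at hlm
      exact mul_right_cancel₀ hi hlm
    · obtain ⟨l, hl, hy⟩ := wpRel_iff.1 y.2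
      exact ⟨Units.mk0 l hl, Subtype.ext (Subtype.ext hy.symm)⟩
  rw [← Nat.card_eq_of_bijective orbit hbij, Nat.card_units]

theorem card_eq_mul_card_wpPoints [Finite F] {S : {v : Fin 4 → F // v ≠ 0} → Prop}
    (hS : ∀ x y, wpRel F x y → S x → S y) (hfree : ∀ x, S x → ∃ i : Fin 3, x.1 i.succ ≠ 0) :
    Nat.card {x // S x} = (Nat.card F - 1) *
      Nat.card {P : Quotient (wpSetoid F) // ∀ x, Quotient.mk (wpSetoid F) x = P → S x} := by
  have hsymm {x y} (h : Quotient.mk (wpSetoid F) y = Quotient.mk _ x) : wpRel F x y :=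
    (wpSetoid F).iseqv.symm (Quotient.exact h)
  refine Nat.card_eq_mul_of_card_fiber_eq
    (fun x => ⟨Quotient.mk _ x.1, fun y hy => hS _ _ (hsymm hy) x.2⟩) ?_
  rintro ⟨P, hP⟩
  obtain ⟨x, rfl⟩ := Quotient.exists_rep P
  obtain ⟨i, hi⟩ := hfree x (hP x rfl)
  rw [← card_wpRel_of_succ_ne_zero hi]
  exact Nat.card_congr
    { toFun a := ⟨a.1.1, hsymm (congrArg Subtype.val a.2)⟩
      invFun y := ⟨⟨y.1, hS _ _ y.2 (hP x rfl)⟩,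
        Subtype.ext (Quotient.sound ((wpSetoid F).iseqv.symm y.2))⟩
      left_inv _ := rfl
      right_inv _ := rfl }

end WeightedProjective

section Surface

variable {F : Type*} [Field F]

def OnSurface (a : F) (x : Fin 4 → F) : Prop :=
  x 0 ^ 2 = a * x 1 * x 2 * x 3 * (x 1 + x 2 + x 3)

theorem onSurface_zero (a : F) : OnSurface a 0 := by
  simp [OnSurface]

theorem OnSurface.wpScale {a : F} {x : Fin 4 → F} (hx : OnSurface a x) (l : F) :
    OnSurface a (wpScale l x) := by
  simp only [OnSurface, _root_.wpScale, Matrix.cons_val] at hx ⊢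
  linear_combination l ^ 4 * hx

theorem OnSurface.exists_succ_ne_zero {a : F} {x : Fin 4 → F} (hx : OnSurface a x) (hx0 : x ≠ 0) :
    ∃ i : Fin 3, x i.succ ≠ 0 := by
  by_contra! h
  obtain ⟨h1, h2, h3⟩ : x 1 = 0 ∧ x 2 = 0 ∧ x 3 = 0 := ⟨h 0, h 1, h 2⟩
  refine hx0 (funext fun i => ?_)
  fin_cases i
  · simpa [OnSurface, h1, h2, h3] using hx
  exacts [h1, h2, h3]

variable [Fintype F] [DecidableEq F]

def finFourEquiv (F : Type*) : (Fin 4 → F) ≃ (F × F × F) × F where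
  toFun x := ((x 1, x 2, x 3), x 0)
  invFun p := ![p.2, p.1.1, p.1.2.1, p.1.2.2]
  left_inv x := by ext i; fin_cases i <;> rfl
  right_inv _ := rfl

theorem card_onSurface (hF : ringChar F ≠ 2) (a : F) :
    (Nat.card {x // OnSurface a x} : ℤ) =
      Fintype.card F ^ 3 + quadraticChar F (-a) * (Fintype.card F * (Fintype.card F - 1)) := by
  let g (c : F × F × F) := a * c.1 * c.2.1 * c.2.2 * (c.1 + c.2.1 + c.2.2)
  have e : {x // OnSurface a x} ≃ {p : (F × F × F) × F // p.2 ^ 2 = g p.1} :=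
    (finFourEquiv F).subtypeEquiv fun _ => Iff.rfl
  rw [Nat.card_congr e, card_subtype_sq_eq_sum_quadraticChar hF g, sum_add_distrib]
  simp only [Fintype.sum_prod_type, g, sum_quadraticChar_surface hF, sum_const, card_univ,
    Fintype.card_prod]
  ring

theorem card_wpPoints_onSurface (hF : ringChar F ≠ 2) (a : F) :
    ((Fintype.card F : ℤ) - 1) * Nat.card {P : Quotient (wpSetoid F) //
        ∀ x, Quotient.mk (wpSetoid F) x = P → OnSurface a x.1} + 1 =
      Fintype.card F ^ 3 + quadraticChar F (-a) * (Fintype.card F * (Fintype.card F - 1)) := by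
  have hcone := card_eq_mul_card_wpPoints (S := fun x => OnSurface a x.1)
    (fun x y hxy hx => by obtain ⟨l, -, hy⟩ := wpRel_iff.1 hxy; exact hy ▸ hx.wpScale l)
    (fun x hx => hx.exists_succ_ne_zero x.2)
  rw [← card_onSurface hF, ← Nat.card_subtype_ne_add_one (onSurface_zero a), hcone,
    Nat.card_eq_fintype_card (α := F)]
  push_cast [Nat.cast_sub Fintype.card_pos]
  ring

end Surface

open scoped Classical in
/-- for `q` odd and `α ∈ F_q^×`, the surface `t² = α·u·v·w·(u+v+w)` in the
weighted projective space `ℙ(2,1,1,1)` over `F_q` has exactly `q² + (1 + χ(−α))·q + 1`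
points, where `χ` is the quadratic character. -/
theorem stmt10 {F : Type*} [Field F] [Fintype F] (hodd : Odd (Fintype.card F))
    (α : F) (hα : α ≠ 0) :
    (Nat.card {P : Quotient (wpSetoid F) //
        ∀ x : {v : Fin 4 → F // v ≠ 0}, Quotient.mk (wpSetoid F) x = P →
          (x.1 0) ^ 2 = α * x.1 1 * x.1 2 * x.1 3 * (x.1 1 + x.1 2 + x.1 3)} : ℤ) =
      (Fintype.card F : ℤ) ^ 2 +
        (1 + (if IsSquare (-α) then (1 : ℤ) else -1)) * (Fintype.card F : ℤ) + 1 := by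
  have hF : ringChar F ≠ 2 := fun h => by
    have := FiniteField.even_card_of_char_two h
    rw [Nat.odd_iff] at hodd
    omega
  have hχ : quadraticChar F (-α) = if IsSquare (-α) then 1 else -1 := by
    split_ifs with hsq
    exacts [(quadraticChar_one_iff_isSquare (neg_ne_zero.2 hα)).2 hsq,
      quadraticChar_neg_one_iff_not_isSquare.2 hsq]
  have hq : (1 : ℤ) < Fintype.card F := by exact_mod_cast Fintype.one_lt_card
  have hcount := card_wpPoints_onSurface hF α
  simp only [OnSurface, hχ] at hcount
  apply mul_left_cancel₀ (sub_ne_zero.2 hq.ne')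
  linear_combination hcount
end

section
/- Let σ_1, σ_2 : G → GL_r(Z_ℓ) be homomorphisms with det σ_1 = det σ_2, whose reductions mod ℓ^n are equal (n ≥ 1). For g ∈ G define μ(g) by σ_1(g) = (1 + ℓ^n μ(g)) σ_2(g), taking μ(g) to be a matrix over Z_ℓ reduced mod ℓ. Then μ(g) has trace 0 mod ℓ, and the map δ_n(g) = (μ(g) mod ℓ, σ_1(g) mod ℓ) is a group homomorphism from G to M_r^{tr=0}(F_ℓ) ⋊ GL_r(F_ℓ), where GL_r(F_ℓ) acts on trace-zero matrices by conjugation. Moreover (tr σ_1(g) − tr σ_2(g))/ℓ^n ≡ tr(μ(g)·σ̄_1(g)) (mod ℓ). -/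
open scoped Matrix

set_option maxHeartbeats 1000000 in
/-- let `σ₁, σ₂ : G → GL_r(ℤ_ℓ)` have equal determinants and equal reductions
mod `ℓⁿ` (`n ≥ 1`), and write `σ₁(g) = (1 + ℓⁿ μ(g)) σ₂(g)`.  Then (a) `μ(g)` has trace `0`
mod `ℓ`; (b) `δ_n(g) = (μ(g) mod ℓ, σ₁(g) mod ℓ)` is a homomorphism to the semidirect product
`M_r^{tr=0}(𝔽_ℓ) ⋊ GL_r(𝔽_ℓ)` — i.e. the cocycle rule
`μ̄(gh) = μ̄(g) + σ̄₁(g)·μ̄(h)·σ̄₁(g)⁻¹` holds, matching the semidirect multiplication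
`(A,M)(A',M') = (A + M A' M⁻¹, M M')`; and (c)
`(tr σ₁(g) − tr σ₂(g))/ℓⁿ ≡ tr(μ(g)·σ̄₁(g)) (mod ℓ)`. -/
theorem stmt16 {G : Type*} [Group G] (ℓ : ℕ) [Fact ℓ.Prime] (r n : ℕ) (hn : 1 ≤ n)
    (σ1 σ2 : G →* GL (Fin r) ℤ_[ℓ])
    (hdet : ∀ g, (σ1 g : Matrix (Fin r) (Fin r) ℤ_[ℓ]).det =
      (σ2 g : Matrix (Fin r) (Fin r) ℤ_[ℓ]).det)
    (hred : ∀ g, (σ1 g : Matrix (Fin r) (Fin r) ℤ_[ℓ]).map (PadicInt.toZModPow n) =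
      (σ2 g : Matrix (Fin r) (Fin r) ℤ_[ℓ]).map (PadicInt.toZModPow n))
    (μ : G → Matrix (Fin r) (Fin r) ℤ_[ℓ])
    (hμ : ∀ g, (σ1 g : Matrix (Fin r) (Fin r) ℤ_[ℓ]) =
      (1 + (ℓ : ℤ_[ℓ]) ^ n • μ g) * (σ2 g : Matrix (Fin r) (Fin r) ℤ_[ℓ])) :
    (∀ g, ((μ g).map PadicInt.toZMod).trace = 0) ∧
    (∀ g h : G, (μ (g * h)).map PadicInt.toZMod =
        (μ g).map PadicInt.toZMod +
          ((σ1 g : Matrix (Fin r) (Fin r) ℤ_[ℓ]).map PadicInt.toZMod) *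
            ((μ h).map PadicInt.toZMod) *
            ((σ1 g : Matrix (Fin r) (Fin r) ℤ_[ℓ]).map PadicInt.toZMod)⁻¹) ∧
    (∀ g, ∀ t : ℤ_[ℓ],
        (σ1 g : Matrix (Fin r) (Fin r) ℤ_[ℓ]).trace -
            (σ2 g : Matrix (Fin r) (Fin r) ℤ_[ℓ]).trace = (ℓ : ℤ_[ℓ]) ^ n * t →
        PadicInt.toZMod t =
          (((μ g).map PadicInt.toZMod) *
            ((σ1 g : Matrix (Fin r) (Fin r) ℤ_[ℓ]).map PadicInt.toZMod)).trace) := by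
  have hε : (PadicInt.toZMod : ℤ_[ℓ] →+* ZMod ℓ) ((ℓ : ℤ_[ℓ]) ^ n) = 0 := by
    rw [map_pow, map_natCast, ZMod.natCast_self, zero_pow (by omega)]
  have hεne : ((ℓ : ℤ_[ℓ]) ^ n) ≠ 0 :=
    pow_ne_zero _ (Nat.cast_ne_zero.mpr (Fact.out (p := ℓ.Prime)).ne_zero)
  set F : Matrix (Fin r) (Fin r) ℤ_[ℓ] →+* Matrix (Fin r) (Fin r) (ZMod ℓ) :=
    (PadicInt.toZMod : ℤ_[ℓ] →+* ZMod ℓ).mapMatrix with hF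
  have hFm : ∀ M : Matrix (Fin r) (Fin r) ℤ_[ℓ], F M = M.map PadicInt.toZMod := fun _ => rfl
  have hsm : ∀ M : Matrix (Fin r) (Fin r) ℤ_[ℓ], F ((ℓ : ℤ_[ℓ]) ^ n • M) = 0 := by
    intro M; ext i j
    show PadicInt.toZMod ((ℓ : ℤ_[ℓ]) ^ n * M i j) = 0
    rw [map_mul, hε, zero_mul]
  have hbar : ∀ g, F (σ1 g) = F (σ2 g) := by
    intro g
    rw [hμ g, map_mul, map_add, map_one, hsm, add_zero, one_mul]
  have hu2 : ∀ g, IsUnit ((σ2 g : Matrix (Fin r) (Fin r) ℤ_[ℓ])) := fun g => (σ2 g).isUnit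
  have htr : ∀ M : Matrix (Fin r) (Fin r) ℤ_[ℓ],
      PadicInt.toZMod M.trace = (M.map PadicInt.toZMod).trace := by
    intro M
    simp [Matrix.trace, Matrix.diag, Matrix.map_apply, map_sum]
  have hcancel : ∀ M N : Matrix (Fin r) (Fin r) ℤ_[ℓ],
      (ℓ : ℤ_[ℓ]) ^ n • M = (ℓ : ℤ_[ℓ]) ^ n • N → M = N := by
    intro M N hMN
    ext i j
    have := congrFun (congrFun hMN i) j
    simp only [Matrix.smul_apply, smul_eq_mul] at this
    exact mul_left_cancel₀ hεne this
  -- (a)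
  refine ⟨?_, ?_, ?_⟩
  · intro g
    have h1 : (1 + (ℓ : ℤ_[ℓ]) ^ n • μ g).det = 1 := by
      have h := hdet g
      rw [hμ g, Matrix.det_mul] at h
      have hdu : IsUnit ((σ2 g : Matrix (Fin r) (Fin r) ℤ_[ℓ]).det) :=
        (Matrix.isUnit_iff_isUnit_det _).mp (hu2 g)
      exact hdu.mul_right_cancel (by rw [h, one_mul])
    have h2 := Matrix.det_one_add_smul ((ℓ : ℤ_[ℓ]) ^ n) (μ g)
    rw [h1] at h2
    set c := Polynomial.eval ((ℓ : ℤ_[ℓ]) ^ n)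
      (1 + (Polynomial.X : Polynomial ℤ_[ℓ]) • (μ g).map Polynomial.C).det.divX.divX with hc
    have h4 : (ℓ : ℤ_[ℓ]) ^ n * ((μ g).trace + c * (ℓ : ℤ_[ℓ]) ^ n) = (ℓ : ℤ_[ℓ]) ^ n * 0 := by
      linear_combination -h2
    have h5 := mul_left_cancel₀ hεne h4
    have h6 : (μ g).trace = -(c * (ℓ : ℤ_[ℓ]) ^ n) := by linear_combination h5
    rw [← htr, h6]
    simp [hε]
  -- (b)
  · intro g h
    set ε : ℤ_[ℓ] := (ℓ : ℤ_[ℓ]) ^ n with hε'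
    set S : Matrix (Fin r) (Fin r) ℤ_[ℓ] := (σ2 g : Matrix (Fin r) (Fin r) ℤ_[ℓ]) with hS
    set T : Matrix (Fin r) (Fin r) ℤ_[ℓ] := (σ2 h : Matrix (Fin r) (Fin r) ℤ_[ℓ]) with hT
    have full : (1 + ε • μ (g * h)) * (S * T) =
        ((1 + ε • μ g) * S) * ((1 + ε • μ h) * T) := by
      have e1 : (σ1 (g * h) : Matrix (Fin r) (Fin r) ℤ_[ℓ]) =
          (σ1 g : Matrix (Fin r) (Fin r) ℤ_[ℓ]) * (σ1 h : Matrix (Fin r) (Fin r) ℤ_[ℓ]) := by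
        rw [map_mul]; rfl
      have e2 : (σ2 (g * h) : Matrix (Fin r) (Fin r) ℤ_[ℓ]) = S * T := by
        rw [map_mul]; rfl
      rw [← e2, ← hμ, e1, hμ g, hμ h]
    have key : (1 + ε • μ (g * h)) * S = ((1 + ε • μ g) * S) * (1 + ε • μ h) := by
      apply (hu2 h).mul_right_cancel
      rw [← hT, mul_assoc, mul_assoc]
      exact full
    have key2 : ε • (μ (g * h) * S) =
        ε • (μ g * S + (S * μ h + ε • (μ g * S * μ h))) := by
      have expandL : (1 + ε • μ (g * h)) * S = S + ε • (μ (g * h) * S) := by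
        rw [Matrix.add_mul, one_mul, Matrix.smul_mul]
      have expandR : ((1 + ε • μ g) * S) * (1 + ε • μ h) =
          S + ε • (μ g * S + (S * μ h + ε • (μ g * S * μ h))) := by
        calc ((1 + ε • μ g) * S) * (1 + ε • μ h)
            = (S + ε • (μ g * S)) * (1 + ε • μ h) := by
              rw [Matrix.add_mul, one_mul, Matrix.smul_mul]
          _ = (S + ε • (μ g * S)) + (S + ε • (μ g * S)) * (ε • μ h) := by
              rw [Matrix.mul_add, mul_one]
          _ = (S + ε • (μ g * S)) + ε • ((S + ε • (μ g * S)) * μ h) := by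
              rw [Matrix.mul_smul]
          _ = (S + ε • (μ g * S)) + ε • (S * μ h + ε • (μ g * S * μ h)) := by
              rw [Matrix.add_mul, Matrix.smul_mul]
          _ = S + ε • (μ g * S + (S * μ h + ε • (μ g * S * μ h))) := by
              rw [add_assoc, ← smul_add]
      rw [expandL, expandR] at key
      exact add_left_cancel key
    have key3 : F (μ (g * h)) * F S = F (μ g) * F S + F S * F (μ h) := by
      have h9 := congrArg F (hcancel _ _ key2)
      rw [map_mul, map_add, map_mul, map_add, map_mul, hsm, add_zero] at h9
      exact h9
    have hSdet : IsUnit (F S).det := by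
      have h10 : (F S).det = PadicInt.toZMod S.det := (RingHom.map_det _ S).symm
      rw [h10]
      exact ((Matrix.isUnit_iff_isUnit_det _).mp (hu2 g)).map PadicInt.toZMod
    have hinv : F S * (F S)⁻¹ = 1 := Matrix.mul_nonsing_inv _ hSdet
    have goal2 : F (μ (g * h)) = F (μ g) + F S * F (μ h) * (F S)⁻¹ := by
      calc F (μ (g * h)) = F (μ (g * h)) * (F S * (F S)⁻¹) := by rw [hinv, mul_one]
        _ = (F (μ (g * h)) * F S) * (F S)⁻¹ := by rw [mul_assoc]
        _ = (F (μ g) * F S + F S * F (μ h)) * (F S)⁻¹ := by rw [key3]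
        _ = F (μ g) * (F S * (F S)⁻¹) + F S * F (μ h) * (F S)⁻¹ := by
            rw [Matrix.add_mul, mul_assoc]
        _ = F (μ g) + F S * F (μ h) * (F S)⁻¹ := by rw [hinv, mul_one]
    have hb := hbar g
    rw [hFm, hFm] at hb
    calc (μ (g * h)).map PadicInt.toZMod = F (μ (g * h)) := (hFm _).symm
      _ = F (μ g) + F S * F (μ h) * (F S)⁻¹ := goal2
      _ = (μ g).map PadicInt.toZMod +
          ((σ1 g : Matrix (Fin r) (Fin r) ℤ_[ℓ]).map PadicInt.toZMod) *
            ((μ h).map PadicInt.toZMod) *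
            ((σ1 g : Matrix (Fin r) (Fin r) ℤ_[ℓ]).map PadicInt.toZMod)⁻¹ := by
          rw [hFm, hFm, hFm, hb]
  -- (c)
  · intro g t ht
    have h1 : (ℓ : ℤ_[ℓ]) ^ n * t =
        (ℓ : ℤ_[ℓ]) ^ n * (μ g * (σ2 g : Matrix (Fin r) (Fin r) ℤ_[ℓ])).trace := by
      rw [← ht, hμ g, Matrix.add_mul, one_mul, Matrix.smul_mul, Matrix.trace_add,
        Matrix.trace_smul, smul_eq_mul]
      ring
    have h2 := mul_left_cancel₀ hεne h1
    have hb := hbar g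
    rw [hFm, hFm] at hb
    rw [h2, htr, Matrix.map_mul, hb]
end
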